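/- Let r ∈ ℂ with |r| < 1 and f ∈ ℂ, and define error recursion e_{n+1}^{k+1} = r·e_n^{k+1} + f·e_n^k for n = 0,…,N−1 with e_0^{k+1} = 0 and |e_n^0| ≤ δ for all n. Then max_n |e_n^{k}| ≤ (|f|/(1−|r|))^k · δ for all k ≥ 0. -/

import Mathlib

/-- The scalar error recursion of the classical parareal algorithm:
`e_{n+1}^{k+1} = r e_n^{k+1} + f e_n^k` with `e_0^{k+1} = 0`, `|r| < 1`, and
`|e_n^0| ≤ δ`, implies `max_n |e_n^k| ≤ (|f|/(1−|r|))^k δ`. -/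
theorem stmt17 (N : ℕ) (r f : ℂ) (hr : ‖r‖ < 1) (δ : ℝ)
    (e : ℕ → ℕ → ℂ)
    (hrec : ∀ k, ∀ n < N, e (k + 1) (n + 1) = r * e (k + 1) n + f * e k n)
    (h0 : ∀ k, e (k + 1) 0 = 0)
    (hinit : ∀ n ≤ N, ‖e 0 n‖ ≤ δ) :
    ∀ k, ∀ n ≤ N,
      ‖e k n‖ ≤ (‖f‖ / (1 - ‖r‖)) ^ k * δ := by
  have hr0 : (0:ℝ) ≤ ‖r‖ := norm_nonneg _
  have h1r : (0:ℝ) < 1 - ‖r‖ := by linarith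
  intro k
  induction k with
  | zero => simpa using hinit
  | succ k ih =>
    set B : ℝ := (‖f‖ / (1 - ‖r‖)) ^ k * δ with hB
    have hB0 : 0 ≤ B := le_trans (norm_nonneg _) (ih 0 (Nat.zero_le N))
    have key : ∀ n ≤ N, ‖e (k+1) n‖ ≤
        ‖f‖ * (∑ j ∈ Finset.range n, ‖r‖ ^ j) * B := by
      intro n
      induction n with
      | zero => intro _; simp [h0]
      | succ n ihn =>
        intro hn
        have hnN : n < N := hn
        have hn' : n ≤ N := Nat.le_of_lt hnN
        have := hrec k n hnN
        calc ‖e (k+1) (n+1)‖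
            ≤ ‖r * e (k+1) n‖ + ‖f * e k n‖ := by
              rw [this]; exact norm_add_le _ _
          _ = ‖r‖ * ‖e (k+1) n‖
              + ‖f‖ * ‖e k n‖ := by simp [map_mul]
          _ ≤ ‖r‖ * (‖f‖ * (∑ j ∈ Finset.range n, ‖r‖ ^ j) * B)
              + ‖f‖ * B := by
              gcongr
              · exact ihn hn'
              · exact ih n hn'
          _ = ‖f‖ * (∑ j ∈ Finset.range (n+1), ‖r‖ ^ j) * B := by
              rw [Finset.sum_range_succ']
              simp only [pow_succ, ← Finset.sum_mul]
              ring
    intro n hn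
    have hsum : (∑ j ∈ Finset.range n, ‖r‖ ^ j) ≤ 1 / (1 - ‖r‖) := by
      rw [le_div_iff₀ h1r]
      calc (∑ j ∈ Finset.range n, ‖r‖ ^ j) * (1 - ‖r‖)
          = 1 - ‖r‖ ^ n := by
            have h := geom_sum_mul (‖r‖) n
            nlinarith [h]
        _ ≤ 1 := by nlinarith [pow_nonneg hr0 n]
    calc ‖e (k+1) n‖
        ≤ ‖f‖ * (∑ j ∈ Finset.range n, ‖r‖ ^ j) * B := key n hn
      _ ≤ ‖f‖ * (1 / (1 - ‖r‖)) * B := by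
          gcongr
      _ = (‖f‖ / (1 - ‖r‖)) ^ (k+1) * δ := by
          rw [hB]; ring
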